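/- Let [a], [b] ∈ Λ₂ with Supp(a) ∩ Supp(b) = ∅ (so |Supp(a) ∪ Supp(b)| = 4). Then prod(a+b) ∈ {±1} or prod(a+b) ∈ {±i}, and which of the two alternatives holds does not depend on the chosen representatives a, b. If prod(a+b) = ±1, then mult(a,b) = 6 and Λ(a,b) = {[ξa + b] : ξ ∈ μ₄} ⊆ Λ₃, a set of 4 elements; if prod(a+b) = ±i, then mult(a,b) = 2. -/
import Mathlib


open Complex

noncomputable section

namespace G31

/-- Vectors `a = (a₁,a₂,a₃,a₄) ∈ ℂ⁴`. -/
abbrev V : Type := Fin 4 → ℂ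

/-- `μ₄ ⊂ ℂ`, the group of fourth roots of unity `{1, i, -1, -i}`. -/
def mu4 : Set ℂ := {z : ℂ | z ^ 4 = 1}

/-- `Ψ = μ₄ ∪ {0}`. -/
def Psi : Set ℂ := insert 0 mu4

/-- `a ∈ Ψ⁴`. -/
def PsiV (a : V) : Prop := ∀ k, a k ∈ Psi

/-- The diagonal multiplicative action of `μ₄` on `ℂ⁴`: `a ~ b` iff `b = ξ • a` for some
`ξ ∈ μ₄`. -/
def rel (a b : V) : Prop := ∃ ξ : ℂ, ξ ^ 4 = 1 ∧ b = ξ • a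

theorem rel_refl (a : V) : rel a a := ⟨1, by norm_num, by simp⟩

theorem rel_symm {a b : V} (h : rel a b) : rel b a := by
  obtain ⟨ξ, hξ, rfl⟩ := h
  refine ⟨ξ ^ 3, by rw [show (ξ ^ 3) ^ 4 = (ξ ^ 4) ^ 3 by ring, hξ, one_pow], ?_⟩
  rw [smul_smul, show ξ ^ 3 * ξ = ξ ^ 4 by ring, hξ, one_smul]

theorem rel_trans {a b c : V} (h : rel a b) (h' : rel b c) : rel a c := by
  obtain ⟨ξ, hξ, rfl⟩ := h
  obtain ⟨η, hη, rfl⟩ := h'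
  exact ⟨η * ξ, by rw [mul_pow, hξ, hη, one_mul], by rw [smul_smul]⟩

/-- The setoid on `ℂ⁴` given by the diagonal `μ₄`-action. -/
def phiSetoid : Setoid V := ⟨rel, rel_refl, rel_symm, rel_trans⟩

/-- `Φ`, the quotient of `Ψ⁴` (here of `ℂ⁴`) by the diagonal `μ₄`-action. -/
def Phi : Type := Quotient phiSetoid

/-- The class `[a] ∈ Φ` of `a`. -/
def cls (a : V) : Phi := Quotient.mk phiSetoid a

/-- `Supp a = {k : aₖ ≠ 0}`. -/
def Supp (a : V) : Set (Fin 4) := {k | a k ≠ 0}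

/-- `prod a = a₁a₂a₃a₄`. -/
def prod4 (a : V) : ℂ := ∏ k, a k

/-- The hyperplane `X_a = {x : ∑ aₖ xₖ = 0} ⊂ ℂ⁴`. -/
def Xa (a : V) : Set V := {x | ∑ k, a k * x k = 0}

/-- The support of a class `[a] ∈ Φ` (independent of the representative). -/
def SuppC (c : Phi) : Set (Fin 4) := {k | ∃ a : V, cls a = c ∧ a k ≠ 0}

/-- `Λ₁ = {[a] : a ∈ Ψ⁴, |Supp a| = 1}`. -/
def Lambda1 : Set Phi := {c | ∃ a : V, cls a = c ∧ PsiV a ∧ (Supp a).ncard = 1}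

/-- `Λ₂ = {[a] : a ∈ Ψ⁴, |Supp a| = 2}`. -/
def Lambda2 : Set Phi := {c | ∃ a : V, cls a = c ∧ PsiV a ∧ (Supp a).ncard = 2}

/-- `Λ₃ = {[a] : a ∈ Ψ⁴, |Supp a| = 4, prod a = ±1}`. -/
def Lambda3 : Set Phi :=
  {c | ∃ a : V, cls a = c ∧ PsiV a ∧ (Supp a).ncard = 4 ∧ (prod4 a = 1 ∨ prod4 a = -1)}

/-- `Λ = Λ₁ ⊔ Λ₂ ⊔ Λ₃`, the hyperplanes of the reflection arrangement of type `G₃₁`. -/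
def Lambda : Set Phi := Lambda1 ∪ Lambda2 ∪ Lambda3

/-- `Λ̂(a,b) = {[c] ∈ Λ : X_c ⊇ X_a ∩ X_b}` (all notions independent of representatives). -/
def LambdaHat (A B : Phi) : Set Phi :=
  {c | c ∈ Lambda ∧ ∃ xa xb xc : V, cls xa = A ∧ cls xb = B ∧ cls xc = c ∧
    Xa xa ∩ Xa xb ⊆ Xa xc}

/-- `mult(a,b) = |Λ̂(a,b)|`. -/
def mult (A B : Phi) : ℕ := (LambdaHat A B).ncard

/-- `Λ(a,b) = Λ̂(a,b) \ {[a],[b]}`. -/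
def LambdaAB (A B : Phi) : Set Phi := LambdaHat A B \ {A, B}

/-- `Λ_{j'}^m(a) = {[b] ∈ Λ_{j'} : [b] ≠ [a], mult(a,b) = m}`, where `S` stands for `Λ_{j'}`. -/
def LambdaPow (S : Set Phi) (m : ℕ) (A : Phi) : Set Phi :=
  {B | B ∈ S ∧ B ≠ A ∧ mult A B = m}

/-- `diff([a],[b]) = min_ξ |Supp (ξ a − b)|`, the minimum over representatives. -/
def diffC (A B : Phi) : ℕ :=
  sInf {n | ∃ a b : V, cls a = A ∧ cls b = B ∧ (Supp (a - b)).ncard = n}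

end G31
namespace G31

lemma mu4_ne_zero {z : ℂ} (h : z ^ 4 = 1) : z ≠ 0 := by
  intro h0; rw [h0] at h; norm_num at h

lemma cls_eq_iff {a b : V} : cls a = cls b ↔ rel a b :=
  ⟨fun h => Quotient.exact h, fun h => Quotient.sound h⟩

lemma mem_Psi_iff {z : ℂ} : z ∈ Psi ↔ z = 0 ∨ z ^ 4 = 1 := by
  simp [Psi, mu4, Set.mem_insert_iff]

lemma Supp_smul {a : V} {ξ : ℂ} (hξ : ξ ≠ 0) : Supp (ξ • a) = Supp a := by
  ext m; simp [Supp, smul_eq_mul, hξ]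

lemma Supp_rel {a b : V} (h : rel a b) : Supp b = Supp a := by
  obtain ⟨ξ, hξ, rfl⟩ := h; exact Supp_smul (mu4_ne_zero hξ)

lemma Supp_cls_eq {x y : V} (h : cls x = cls y) : Supp x = Supp y :=
  (Supp_rel (cls_eq_iff.mp h)).symm

lemma PsiV_rel {a b : V} (h : rel a b) (ha : PsiV a) : PsiV b := by
  obtain ⟨ξ, hξ, rfl⟩ := h
  intro m
  rcases mem_Psi_iff.mp (ha m) with h0 | h1
  · exact mem_Psi_iff.mpr (Or.inl (by simp [Pi.smul_apply, smul_eq_mul, h0]))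
  · exact mem_Psi_iff.mpr (Or.inr (by rw [Pi.smul_apply, smul_eq_mul, mul_pow, hξ, h1, mul_one]))

lemma sq_cases {z : ℂ} (h : z ^ 2 = 1) : z = 1 ∨ z = -1 := by
  have h2 : (z - 1) * (z + 1) = 0 := by linear_combination h
  rcases mul_eq_zero.mp h2 with h3 | h3
  · left; linear_combination h3
  · right; linear_combination h3

lemma mu4_cases {z : ℂ} (h : z ^ 4 = 1) : z = 1 ∨ z = -1 ∨ z = I ∨ z = -I := by
  have h4 : (z - 1) * (z + 1) * (z - I) * (z + I) = 0 := by
    have e : (z - 1) * (z + 1) * (z - I) * (z + I) = z ^ 4 - 1 := by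
      linear_combination (1 - z ^ 2) * Complex.I_sq
    rw [e, h, sub_self]
  rcases mul_eq_zero.mp h4 with h5 | h5
  · rcases mul_eq_zero.mp h5 with h6 | h6
    · rcases mul_eq_zero.mp h6 with h7 | h7
      · left; linear_combination h7
      · right; left; linear_combination h7
    · right; right; left; linear_combination h6
  · right; right; right; linear_combination h5

lemma sq_pm_of_pow4 {z : ℂ} (h : z ^ 4 = 1) : z ^ 2 = 1 ∨ z ^ 2 = -1 :=
  sq_cases (by rw [show (z ^ 2) ^ 2 = z ^ 4 by ring]; exact h)

lemma univ_eq {i j k l : Fin 4} (hij : i ≠ j) (hik : i ≠ k) (hil : i ≠ l)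
    (hjk : j ≠ k) (hjl : j ≠ l) (hkl : k ≠ l) :
    (Finset.univ : Finset (Fin 4)) = {i, j, k, l} := by
  symm
  apply Finset.eq_univ_of_card
  rw [show ({i, j, k, l} : Finset (Fin 4)) = insert i (insert j (insert k {l})) from rfl,
    Finset.card_insert_of_notMem (by simp [hij, hik, hil]),
    Finset.card_insert_of_notMem (by simp [hjk, hjl]),
    Finset.card_insert_of_notMem (by simp [hkl]), Finset.card_singleton]
  rfl

lemma sum_four (f : Fin 4 → ℂ) {i j k l : Fin 4} (hij : i ≠ j) (hik : i ≠ k) (hil : i ≠ l)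
    (hjk : j ≠ k) (hjl : j ≠ l) (hkl : k ≠ l) :
    ∑ m, f m = f i + f j + f k + f l := by
  rw [univ_eq hij hik hil hjk hjl hkl,
    Finset.sum_insert (by simp [hij, hik, hil]),
    Finset.sum_insert (by simp [hjk, hjl]),
    Finset.sum_insert (by simp [hkl]), Finset.sum_singleton]
  ring

lemma prod_four (f : Fin 4 → ℂ) {i j k l : Fin 4} (hij : i ≠ j) (hik : i ≠ k) (hil : i ≠ l)
    (hjk : j ≠ k) (hjl : j ≠ l) (hkl : k ≠ l) :
    ∏ m, f m = f i * f j * f k * f l := by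
  rw [univ_eq hij hik hil hjk hjl hkl,
    Finset.prod_insert (by simp [hij, hik, hil]),
    Finset.prod_insert (by simp [hjk, hjl]),
    Finset.prod_insert (by simp [hkl]), Finset.prod_singleton]
  ring

lemma prod4_smul (ζ : ℂ) (x : V) : prod4 (ζ • x) = ζ ^ 4 * prod4 x := by
  simp [prod4, Pi.smul_apply, smul_eq_mul, Finset.prod_mul_distrib, Finset.card_univ]

lemma Xa_smul {a : V} {ξ : ℂ} (hξ : ξ ≠ 0) : Xa (ξ • a) = Xa a := by
  ext x
  simp only [Xa, Set.mem_setOf_eq, Pi.smul_apply, smul_eq_mul, mul_assoc, ← Finset.mul_sum]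
  simp [hξ]

lemma Xa_inter_subset (a b : V) (ξ : ℂ) : Xa a ∩ Xa b ⊆ Xa (ξ • a + b) := by
  rintro x ⟨hx1, hx2⟩
  have hx1' : ∑ m, a m * x m = 0 := hx1
  have hx2' : ∑ m, b m * x m = 0 := hx2
  show ∑ m, (ξ • a + b) m * x m = 0
  have e : ∀ m ∈ Finset.univ, (ξ • a + b) m * x m = ξ * (a m * x m) + b m * x m := by
    intro m _; simp [Pi.add_apply, Pi.smul_apply, smul_eq_mul]; ring
  rw [Finset.sum_congr rfl e, Finset.sum_add_distrib, ← Finset.mul_sum, hx1', hx2']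
  simp

end G31
namespace G31

structure Setup (a b : V) (i j k l : Fin 4) : Prop where
  hij : i ≠ j
  hik : i ≠ k
  hil : i ≠ l
  hjk : j ≠ k
  hjl : j ≠ l
  hkl : k ≠ l
  pa : PsiV a
  pb : PsiV b
  hai : a i ≠ 0
  haj : a j ≠ 0
  hak : a k = 0
  hal : a l = 0
  hbi : b i = 0
  hbj : b j = 0
  hbk : b k ≠ 0
  hbl : b l ≠ 0

variable {a b : V} {i j k l : Fin 4}

lemma Setup.ai4 (h : Setup a b i j k l) : (a i) ^ 4 = 1 :=
  ((mem_Psi_iff.mp (h.pa i)).resolve_left h.hai)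

lemma Setup.aj4 (h : Setup a b i j k l) : (a j) ^ 4 = 1 :=
  ((mem_Psi_iff.mp (h.pa j)).resolve_left h.haj)

lemma Setup.bk4 (h : Setup a b i j k l) : (b k) ^ 4 = 1 :=
  ((mem_Psi_iff.mp (h.pb k)).resolve_left h.hbk)

lemma Setup.bl4 (h : Setup a b i j k l) : (b l) ^ 4 = 1 :=
  ((mem_Psi_iff.mp (h.pb l)).resolve_left h.hbl)

lemma Setup.P4 (h : Setup a b i j k l) : (a i * a j * b k * b l) ^ 4 = 1 := by
  rw [mul_pow, mul_pow, mul_pow, h.ai4, h.aj4, h.bk4, h.bl4]; ring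

lemma Setup.mem_cases (h : Setup a b i j k l) (m : Fin 4) :
    m = i ∨ m = j ∨ m = k ∨ m = l := by
  have hu := univ_eq h.hij h.hik h.hil h.hjk h.hjl h.hkl
  have : m ∈ ({i, j, k, l} : Finset (Fin 4)) := hu ▸ Finset.mem_univ m
  simpa using this

lemma exists_setup {A B : Phi} (hA : A ∈ Lambda2) (hB : B ∈ Lambda2) {a b : V}
    (ha : cls a = A) (hb : cls b = B) (hd : Supp a ∩ Supp b = ∅) :
    ∃ i j k l, Setup a b i j k l := by
  obtain ⟨a₀, ha₀, pa₀, ca₀⟩ := hA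
  obtain ⟨b₀, hb₀, pb₀, cb₀⟩ := hB
  have ra : rel a₀ a := cls_eq_iff.mp (ha₀.trans ha.symm)
  have rb : rel b₀ b := cls_eq_iff.mp (hb₀.trans hb.symm)
  have pa : PsiV a := PsiV_rel ra pa₀
  have pb : PsiV b := PsiV_rel rb pb₀
  have sa : Supp a = Supp a₀ := Supp_rel ra
  have sb : Supp b = Supp b₀ := Supp_rel rb
  have ca : (Supp a).ncard = 2 := by rw [sa]; exact ca₀
  have cb : (Supp b).ncard = 2 := by rw [sb]; exact cb₀
  obtain ⟨i, j, hij, hS⟩ := Set.ncard_eq_two.mp ca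
  obtain ⟨k, l, hkl, hT⟩ := Set.ncard_eq_two.mp cb
  have hdm : ∀ m, a m = 0 ∨ b m = 0 := by
    intro m
    by_contra hc
    push_neg at hc
    have : m ∈ Supp a ∩ Supp b := ⟨hc.1, hc.2⟩
    rw [hd] at this
    exact this
  have hai : a i ≠ 0 := by
    have : i ∈ Supp a := by rw [hS]; exact Set.mem_insert i {j}
    exact this
  have haj : a j ≠ 0 := by
    have : j ∈ Supp a := by rw [hS]; exact Set.mem_insert_of_mem i rfl
    exact this
  have hbk : b k ≠ 0 := by
    have : k ∈ Supp b := by rw [hT]; exact Set.mem_insert k {l}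
    exact this
  have hbl : b l ≠ 0 := by
    have : l ∈ Supp b := by rw [hT]; exact Set.mem_insert_of_mem k rfl
    exact this
  have hak : a k = 0 := (hdm k).resolve_right hbk
  have hal : a l = 0 := (hdm l).resolve_right hbl
  have hbi : b i = 0 := (hdm i).resolve_left hai
  have hbj : b j = 0 := (hdm j).resolve_left haj
  exact ⟨i, j, k, l,
    { hij := hij
      hik := fun e => hai (e ▸ hak)
      hil := fun e => hai (e ▸ hal)
      hjk := fun e => haj (e ▸ hak)
      hjl := fun e => haj (e ▸ hal)
      hkl := hkl
      pa := pa, pb := pb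
      hai := hai, haj := haj, hak := hak, hal := hal
      hbi := hbi, hbj := hbj, hbk := hbk, hbl := hbl }⟩

lemma Setup.prod_add (h : Setup a b i j k l) (ξ η : ℂ) :
    prod4 (ξ • a + η • b) = ξ ^ 2 * η ^ 2 * (a i * a j * b k * b l) := by
  rw [prod4, prod_four _ h.hij h.hik h.hil h.hjk h.hjl h.hkl]
  simp only [Pi.add_apply, Pi.smul_apply, smul_eq_mul, h.hak, h.hal, h.hbi, h.hbj]
  ring

lemma Setup.prod_add' (h : Setup a b i j k l) (ξ : ℂ) :
    prod4 (ξ • a + b) = ξ ^ 2 * (a i * a j * b k * b l) := by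
  have := h.prod_add ξ 1
  simpa using this

lemma Setup.prod_ab (h : Setup a b i j k l) :
    prod4 (a + b) = a i * a j * b k * b l := by
  have := h.prod_add 1 1
  simpa using this

end G31
namespace G31

variable {a b : V} {i j k l : Fin 4}

lemma mem_lambdaHat_iff {A B : Phi} (ha : cls a = A) (hb : cls b = B) {C : Phi} :
    C ∈ LambdaHat A B ↔ C ∈ Lambda ∧ ∃ xc, cls xc = C ∧ Xa a ∩ Xa b ⊆ Xa xc := by
  constructor
  · rintro ⟨hC, xa, xb, xc, hxa, hxb, hxc, hsub⟩
    refine ⟨hC, xc, hxc, ?_⟩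
    obtain ⟨ξ, hξ, rfl⟩ := cls_eq_iff.mp (ha.trans hxa.symm)
    obtain ⟨η, hη, rfl⟩ := cls_eq_iff.mp (hb.trans hxb.symm)
    rwa [Xa_smul (mu4_ne_zero hξ), Xa_smul (mu4_ne_zero hη)] at hsub
  · rintro ⟨hC, xc, hxc, hsub⟩
    exact ⟨hC, a, b, xc, ha, hb, hxc, hsub⟩

lemma Lambda_rep {C : Phi} (h : C ∈ Lambda) :
    ∃ w, cls w = C ∧ PsiV w ∧ (Supp w).ncard ≠ 0 := by
  rcases h with (⟨w, hw, pw, cw⟩ | ⟨w, hw, pw, cw⟩) | ⟨w, hw, pw, cw, _⟩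
  · exact ⟨w, hw, pw, by rw [cw]; norm_num⟩
  · exact ⟨w, hw, pw, by rw [cw]; norm_num⟩
  · exact ⟨w, hw, pw, by rw [cw]; norm_num⟩

/-- If `X_a ∩ X_b ⊆ X_c` then `c` is a linear combination of `a` and `b`. -/
lemma Setup.span (h : Setup a b i j k l) {c : V} (hc : Xa a ∩ Xa b ⊆ Xa c) :
    c = (c i / a i) • a + (c k / b k) • b := by
  classical
  set u : V := fun m => if m = i then a j else if m = j then -(a i) else 0 with hu
  set v : V := fun m => if m = k then b l else if m = l then -(b k) else 0 with hv
  have hui : u i = a j := by simp [hu]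
  have huj : u j = -(a i) := by simp [hu, h.hij.symm]
  have huk : u k = 0 := by simp [hu, h.hik.symm, h.hjk.symm]
  have hul : u l = 0 := by simp [hu, h.hil.symm, h.hjl.symm]
  have hvi : v i = 0 := by simp [hv, h.hik, h.hil]
  have hvj : v j = 0 := by simp [hv, h.hjk, h.hjl]
  have hvk : v k = b l := by simp [hv]
  have hvl : v l = -(b k) := by simp [hv, h.hkl.symm]
  have sum4 : ∀ (x y : V), ∑ m, x m * y m = x i * y i + x j * y j + x k * y k + x l * y l :=
    fun x y => sum_four _ h.hij h.hik h.hil h.hjk h.hjl h.hkl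
  have huA : u ∈ Xa a := by
    show ∑ m, a m * u m = 0
    rw [sum4, hui, huj, huk, hul, h.hak, h.hal]; ring
  have huB : u ∈ Xa b := by
    show ∑ m, b m * u m = 0
    rw [sum4, huk, hul, h.hbi, h.hbj]; ring
  have hvA : v ∈ Xa a := by
    show ∑ m, a m * v m = 0
    rw [sum4, hvi, hvj, h.hak, h.hal]; ring
  have hvB : v ∈ Xa b := by
    show ∑ m, b m * v m = 0
    rw [sum4, hvk, hvl, h.hbi, h.hbj]; ring
  have hcu : ∑ m, c m * u m = 0 := hc ⟨huA, huB⟩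
  have hcv : ∑ m, c m * v m = 0 := hc ⟨hvA, hvB⟩
  rw [sum4, hui, huj, huk, hul] at hcu
  rw [sum4, hvi, hvj, hvk, hvl] at hcv
  -- hcu : c i * a j + c j * -(a i) + c k * 0 + c l * 0 = 0
  have e1 : c i * a j = c j * a i := by linear_combination hcu
  have e2 : c k * b l = c l * b k := by linear_combination hcv
  funext m
  rcases h.mem_cases m with hm | hm | hm | hm <;> rw [hm]
  · simp only [Pi.add_apply, Pi.smul_apply, smul_eq_mul, h.hbi, mul_zero, add_zero]
    exact (div_mul_cancel₀ (c i) h.hai).symm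
  · simp only [Pi.add_apply, Pi.smul_apply, smul_eq_mul, h.hbj, mul_zero, add_zero]
    rw [div_mul_eq_mul_div, eq_comm, div_eq_iff h.hai]
    linear_combination e1
  · simp only [Pi.add_apply, Pi.smul_apply, smul_eq_mul, h.hak, mul_zero, zero_add]
    exact (div_mul_cancel₀ (c k) h.hbk).symm
  · simp only [Pi.add_apply, Pi.smul_apply, smul_eq_mul, h.hal, mul_zero, zero_add]
    rw [div_mul_eq_mul_div, eq_comm, div_eq_iff h.hbk]
    linear_combination e2

end G31
namespace G31

variable {a b : V} {i j k l : Fin 4}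

lemma I4 : (I : ℂ) ^ 4 = 1 := by
  rw [show ((I : ℂ)) ^ 4 = (I ^ 2) ^ 2 by ring, I_sq]; norm_num

lemma negI4 : (-I : ℂ) ^ 4 = 1 := by
  rw [show ((-I : ℂ)) ^ 4 = (I ^ 2) ^ 2 by ring, I_sq]; norm_num

lemma pm_ne_pmI {p : ℂ} (h1 : p = 1 ∨ p = -1) (h2 : p = I ∨ p = -I) : False := by
  rcases h1 with rfl | rfl <;> rcases h2 with h2 | h2 <;>
    simp [Complex.ext_iff] at h2

lemma Setup.classify (h : Setup a b i j k l) {C : Phi}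
    (hC : C ∈ LambdaHat (cls a) (cls b)) :
    C = cls a ∨ C = cls b ∨
      ∃ ξ : ℂ, ξ ^ 4 = 1 ∧ C = cls (ξ • a + b) ∧
        (a i * a j * b k * b l = 1 ∨ a i * a j * b k * b l = -1) := by
  obtain ⟨hLam, xc, hxc, hsub⟩ := (mem_lambdaHat_iff rfl rfl).mp hC
  have hspan := h.span hsub
  set α := xc i / a i with hα
  set β := xc k / b k with hβ
  have ev : ∀ m, xc m = α * a m + β * b m := by
    intro m
    conv_lhs => rw [hspan]
    simp [Pi.add_apply, Pi.smul_apply, smul_eq_mul]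
  obtain ⟨w, hw, pw, cw⟩ := Lambda_rep hLam
  obtain ⟨ζ, hζ, hwz⟩ := cls_eq_iff.mp (hxc.trans hw.symm)
  have hζ0 : ζ ≠ 0 := mu4_ne_zero hζ
  have evw : ∀ m, w m = ζ * xc m := by intro m; rw [hwz]; simp [smul_eq_mul]
  have hwi : w i = ζ * (α * a i) := by rw [evw, ev, h.hbi]; ring
  have hwk : w k = ζ * (β * b k) := by rw [evw, ev, h.hak]; ring
  by_cases hβ0 : β = 0
  · by_cases hα0 : α = 0
    · exfalso
      apply cw
      have hw0 : ∀ m, w m = 0 := by intro m; rw [evw, ev, hα0, hβ0]; ring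
      have : Supp w = ∅ := by
        ext m; simp [Supp, hw0 m]
      rw [this, Set.ncard_empty]
    · left
      have hwi0 : w i ≠ 0 := by
        rw [hwi]; exact mul_ne_zero hζ0 (mul_ne_zero hα0 h.hai)
      have h4 : (w i) ^ 4 = 1 := (mem_Psi_iff.mp (pw i)).resolve_left hwi0
      have hα4 : α ^ 4 = 1 := by
        have : (w i) ^ 4 = α ^ 4 := by
          rw [hwi, mul_pow, mul_pow, hζ, h.ai4, one_mul, mul_one]
        rw [this] at h4; exact h4
      have hxca : xc = α • a := by
        funext m; rw [ev, hβ0]; simp [Pi.smul_apply, smul_eq_mul]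
      rw [← hxc, hxca]
      exact cls_eq_iff.mpr (rel_symm ⟨α, hα4, rfl⟩)
  · by_cases hα0 : α = 0
    · right; left
      have hwk0 : w k ≠ 0 := by
        rw [hwk]; exact mul_ne_zero hζ0 (mul_ne_zero hβ0 h.hbk)
      have h4 : (w k) ^ 4 = 1 := (mem_Psi_iff.mp (pw k)).resolve_left hwk0
      have hβ4 : β ^ 4 = 1 := by
        have : (w k) ^ 4 = β ^ 4 := by
          rw [hwk, mul_pow, mul_pow, hζ, h.bk4, one_mul, mul_one]
        rw [this] at h4; exact h4
      have hxcb : xc = β • b := by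
        funext m; rw [ev, hα0]; simp [Pi.smul_apply, smul_eq_mul]
      rw [← hxc, hxcb]
      exact cls_eq_iff.mpr (rel_symm ⟨β, hβ4, rfl⟩)
    · right; right
      have hwi0 : w i ≠ 0 := by
        rw [hwi]; exact mul_ne_zero hζ0 (mul_ne_zero hα0 h.hai)
      have hwk0 : w k ≠ 0 := by
        rw [hwk]; exact mul_ne_zero hζ0 (mul_ne_zero hβ0 h.hbk)
      have hα4 : α ^ 4 = 1 := by
        have h4 : (w i) ^ 4 = 1 := (mem_Psi_iff.mp (pw i)).resolve_left hwi0
        have : (w i) ^ 4 = α ^ 4 := by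
          rw [hwi, mul_pow, mul_pow, hζ, h.ai4, one_mul, mul_one]
        rw [this] at h4; exact h4
      have hβ4 : β ^ 4 = 1 := by
        have h4 : (w k) ^ 4 = 1 := (mem_Psi_iff.mp (pw k)).resolve_left hwk0
        have : (w k) ^ 4 = β ^ 4 := by
          rw [hwk, mul_pow, mul_pow, hζ, h.bk4, one_mul, mul_one]
        rw [this] at h4; exact h4
      refine ⟨α * β⁻¹, by rw [mul_pow, inv_pow, hα4, hβ4]; norm_num, ?_, ?_⟩
      · have hrel : β • ((α * β⁻¹) • a + b) = xc := by
          funext m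
          rw [ev]
          simp only [Pi.smul_apply, Pi.add_apply, smul_eq_mul]
          field_simp
        rw [← hxc]
        exact (cls_eq_iff.mpr ⟨β, hβ4, hrel.symm⟩).symm
      · -- C must be in Lambda3, forcing the product condition
        have hxcm : ∀ m, xc m ≠ 0 := by
          intro m
          rcases h.mem_cases m with hm | hm | hm | hm <;> rw [hm, ev]
          · rw [h.hbi]; simpa using mul_ne_zero hα0 h.hai
          · rw [h.hbj]; simpa using mul_ne_zero hα0 h.haj
          · rw [h.hak]; simpa using mul_ne_zero hβ0 h.hbk
          · rw [h.hal]; simpa using mul_ne_zero hβ0 h.hbl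
        have hcard : ∀ w' : V, cls w' = C → (Supp w').ncard = 4 := by
          intro w' hw'
          have : Supp w' = Supp xc := Supp_rel (cls_eq_iff.mp (hxc.trans hw'.symm))
          rw [this, show Supp xc = Set.univ by ext m; simpa [Supp] using hxcm m]
          simp [Set.ncard_univ]
        rcases hLam with (h1 | h2) | h3
        · obtain ⟨w', hw', _, c1⟩ := h1
          rw [hcard w' hw'] at c1; norm_num at c1
        · obtain ⟨w', hw', _, c2⟩ := h2
          rw [hcard w' hw'] at c2; norm_num at c2
        · obtain ⟨w', hw', pw', _, hpm⟩ := h3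
          obtain ⟨ζ', hζ', hwz'⟩ := cls_eq_iff.mp (hxc.trans hw'.symm)
          have hpw' : prod4 w' = α ^ 2 * β ^ 2 * (a i * a j * b k * b l) := by
            rw [hwz', prod4_smul, hζ', one_mul, hspan, h.prod_add]
          have hε : α ^ 2 * β ^ 2 = 1 ∨ α ^ 2 * β ^ 2 = -1 :=
            sq_cases (by rw [show (α^2*β^2)^2 = α^4*β^4 by ring, hα4, hβ4, one_mul])
          rcases hε with hε | hε <;> rw [hε] at hpw' <;> rcases hpm with hpm | hpm
          · left; rw [hpw'] at hpm; linear_combination hpm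
          · right; rw [hpw'] at hpm; linear_combination hpm
          · right; rw [hpw'] at hpm; linear_combination -hpm
          · left; rw [hpw'] at hpm; linear_combination -hpm

lemma Setup.psiv_comb (h : Setup a b i j k l) {ξ : ℂ} (hξ : ξ ^ 4 = 1) :
    PsiV (ξ • a + b) := by
  intro m
  apply mem_Psi_iff.mpr
  right
  rcases h.mem_cases m with hm | hm | hm | hm <;> rw [hm] <;>
    simp only [Pi.add_apply, Pi.smul_apply, smul_eq_mul]
  · rw [h.hbi, add_zero, mul_pow, hξ, h.ai4, one_mul]
  · rw [h.hbj, add_zero, mul_pow, hξ, h.aj4, one_mul]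
  · rw [h.hak, mul_zero, zero_add, h.bk4]
  · rw [h.hal, mul_zero, zero_add, h.bl4]

lemma Setup.supp_comb (h : Setup a b i j k l) {ξ : ℂ} (hξ : ξ ≠ 0) :
    Supp (ξ • a + b) = Set.univ := by
  ext m
  simp only [Set.mem_univ, iff_true, Supp, Set.mem_setOf_eq]
  rcases h.mem_cases m with hm | hm | hm | hm <;> rw [hm] <;>
    simp only [Pi.add_apply, Pi.smul_apply, smul_eq_mul]
  · rw [h.hbi, add_zero]; exact mul_ne_zero hξ h.hai
  · rw [h.hbj, add_zero]; exact mul_ne_zero hξ h.haj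
  · rw [h.hak, mul_zero, zero_add]; exact h.hbk
  · rw [h.hal, mul_zero, zero_add]; exact h.hbl

lemma Setup.mem_L3 (h : Setup a b i j k l)
    (hP : a i * a j * b k * b l = 1 ∨ a i * a j * b k * b l = -1)
    {ξ : ℂ} (hξ : ξ ^ 4 = 1) : cls (ξ • a + b) ∈ Lambda3 := by
  refine ⟨ξ • a + b, rfl, h.psiv_comb hξ, ?_, ?_⟩
  · rw [h.supp_comb (mu4_ne_zero hξ)]; simp [Set.ncard_univ]
  · rw [h.prod_add']
    rcases sq_pm_of_pow4 hξ with h2 | h2 <;> rcases hP with hp | hp <;>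
      rw [h2, hp] <;> norm_num

lemma Setup.comb_mem_hat (h : Setup a b i j k l)
    (hP : a i * a j * b k * b l = 1 ∨ a i * a j * b k * b l = -1)
    {ξ : ℂ} (hξ : ξ ^ 4 = 1) : cls (ξ • a + b) ∈ LambdaHat (cls a) (cls b) :=
  (mem_lambdaHat_iff rfl rfl).mpr
    ⟨Or.inr (h.mem_L3 hP hξ), ξ • a + b, rfl, Xa_inter_subset a b ξ⟩

lemma A_mem_hat {A B : Phi} (hA : A ∈ Lambda2) {a b : V} (ha : cls a = A) (hb : cls b = B) :
    A ∈ LambdaHat A B :=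
  (mem_lambdaHat_iff ha hb).mpr ⟨Or.inl (Or.inr hA), a, ha, Set.inter_subset_left⟩

lemma B_mem_hat {A B : Phi} (hB : B ∈ Lambda2) {a b : V} (ha : cls a = A) (hb : cls b = B) :
    B ∈ LambdaHat A B :=
  (mem_lambdaHat_iff ha hb).mpr ⟨Or.inl (Or.inr hB), b, hb, Set.inter_subset_right⟩

lemma Setup.AB_ne (h : Setup a b i j k l) : cls a ≠ cls b := by
  intro e
  have hs : Supp a = Supp b := Supp_cls_eq e
  have hi : i ∈ Supp b := hs ▸ (h.hai : i ∈ Supp a)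
  simp only [Supp, Set.mem_setOf_eq] at hi
  exact hi h.hbi

lemma Setup.A_ne_comb (h : Setup a b i j k l) (ξ : ℂ) : cls a ≠ cls (ξ • a + b) := by
  intro e
  have hs : Supp a = Supp (ξ • a + b) := Supp_cls_eq e
  have hk : k ∈ Supp (ξ • a + b) := by
    show (ξ • a + b) k ≠ 0
    simp only [Pi.add_apply, Pi.smul_apply, smul_eq_mul, h.hak, mul_zero, zero_add]
    exact h.hbk
  rw [← hs] at hk
  simp only [Supp, Set.mem_setOf_eq] at hk
  exact hk h.hak

lemma Setup.B_ne_comb (h : Setup a b i j k l) {ξ : ℂ} (hξ : ξ ≠ 0) :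
    cls b ≠ cls (ξ • a + b) := by
  intro e
  have hs : Supp b = Supp (ξ • a + b) := Supp_cls_eq e
  have hk : i ∈ Supp (ξ • a + b) := by
    show (ξ • a + b) i ≠ 0
    simp only [Pi.add_apply, Pi.smul_apply, smul_eq_mul, h.hbi, add_zero]
    exact mul_ne_zero hξ h.hai
  rw [← hs] at hk
  simp only [Supp, Set.mem_setOf_eq] at hk
  exact hk h.hbi

lemma Setup.comb_inj (h : Setup a b i j k l) {ξ η : ℂ}
    (e : cls (ξ • a + b) = cls (η • a + b)) : ξ = η := by
  obtain ⟨ζ, hζ, hz⟩ := cls_eq_iff.mp e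
  have hk : b k = ζ * b k := by
    have := congrFun hz k
    simpa [Pi.add_apply, Pi.smul_apply, smul_eq_mul, h.hak] using this
  have hi : η * a i = ζ * (ξ * a i) := by
    have := congrFun hz i
    simpa [Pi.add_apply, Pi.smul_apply, smul_eq_mul, h.hbi] using this
  have hζ1 : ζ = 1 := by
    have h1 : ζ * b k = 1 * b k := by rw [one_mul]; exact hk.symm
    exact mul_right_cancel₀ h.hbk h1
  rw [hζ1, one_mul] at hi
  exact (mul_right_cancel₀ h.hai hi).symm

end G31
namespace G31

variable {a b : V} {i j k l : Fin 4}

lemma one_ne_negone : (1 : ℂ) ≠ -1 := by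
  intro h
  have := congrArg Complex.re h
  norm_num at this
lemma one_ne_I : (1 : ℂ) ≠ I := by simp [Complex.ext_iff]
lemma one_ne_negI : (1 : ℂ) ≠ -I := by simp [Complex.ext_iff]
lemma I_ne_negone : (I : ℂ) ≠ -1 := by simp [Complex.ext_iff]
lemma I_ne_negI : (I : ℂ) ≠ -I := by
  intro h
  have := congrArg Complex.im h
  norm_num at this
lemma negone_ne_negI : (-1 : ℂ) ≠ -I := by simp [Complex.ext_iff]

lemma Setup.hat_eq (h : Setup a b i j k l) (hA2 : cls a ∈ Lambda2) (hB2 : cls b ∈ Lambda2)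
    (hP : a i * a j * b k * b l = 1 ∨ a i * a j * b k * b l = -1) :
    LambdaHat (cls a) (cls b) =
      insert (cls a) (insert (cls b) (insert (cls ((1 : ℂ) • a + b))
        (insert (cls (I • a + b)) (insert (cls ((-1 : ℂ) • a + b))
          {cls ((-I : ℂ) • a + b)})))) := by
  ext C
  simp only [Set.mem_insert_iff, Set.mem_singleton_iff]
  constructor
  · intro hC
    rcases h.classify hC with e | e | ⟨ξ, hξ, e, _⟩
    · exact Or.inl e
    · exact Or.inr (Or.inl e)
    · rcases mu4_cases hξ with rfl | rfl | rfl | rfl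
      · exact Or.inr (Or.inr (Or.inl e))
      · exact Or.inr (Or.inr (Or.inr (Or.inr (Or.inl e))))
      · exact Or.inr (Or.inr (Or.inr (Or.inl e)))
      · exact Or.inr (Or.inr (Or.inr (Or.inr (Or.inr e))))
  · rintro (rfl | rfl | rfl | rfl | rfl | rfl)
    · exact A_mem_hat hA2 rfl rfl
    · exact B_mem_hat hB2 rfl rfl
    · exact h.comb_mem_hat hP (by norm_num)
    · exact h.comb_mem_hat hP I4
    · exact h.comb_mem_hat hP (by norm_num)
    · exact h.comb_mem_hat hP negI4

lemma Setup.hat_eq2 (h : Setup a b i j k l) (hA2 : cls a ∈ Lambda2) (hB2 : cls b ∈ Lambda2)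
    (hPi : a i * a j * b k * b l = I ∨ a i * a j * b k * b l = -I) :
    LambdaHat (cls a) (cls b) = {cls a, cls b} := by
  ext C
  simp only [Set.mem_insert_iff, Set.mem_singleton_iff]
  constructor
  · intro hC
    rcases h.classify hC with e | e | ⟨ξ, hξ, e, hPP⟩
    · exact Or.inl e
    · exact Or.inr e
    · exact absurd hPi (by simpa using pm_ne_pmI hPP)
  · rintro (rfl | rfl)
    · exact A_mem_hat hA2 rfl rfl
    · exact B_mem_hat hB2 rfl rfl

lemma Setup.lab_eq (h : Setup a b i j k l) (hA2 : cls a ∈ Lambda2) (hB2 : cls b ∈ Lambda2)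
    (hP : a i * a j * b k * b l = 1 ∨ a i * a j * b k * b l = -1) :
    LambdaAB (cls a) (cls b) =
      insert (cls ((1 : ℂ) • a + b)) (insert (cls (I • a + b))
        (insert (cls ((-1 : ℂ) • a + b)) {cls ((-I : ℂ) • a + b)})) := by
  rw [LambdaAB, h.hat_eq hA2 hB2 hP]
  ext C
  simp only [Set.mem_diff, Set.mem_insert_iff, Set.mem_singleton_iff]
  constructor
  · rintro ⟨h6, hnot⟩
    push_neg at hnot
    rcases h6 with e | e | e | e | e | e
    · exact absurd e hnot.1
    · exact absurd e hnot.2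
    · exact Or.inl e
    · exact Or.inr (Or.inl e)
    · exact Or.inr (Or.inr (Or.inl e))
    · exact Or.inr (Or.inr (Or.inr e))
  · intro h4
    constructor
    · rcases h4 with e | e | e | e
      · exact Or.inr (Or.inr (Or.inl e))
      · exact Or.inr (Or.inr (Or.inr (Or.inl e)))
      · exact Or.inr (Or.inr (Or.inr (Or.inr (Or.inl e))))
      · exact Or.inr (Or.inr (Or.inr (Or.inr (Or.inr e))))
    · push_neg
      rcases h4 with rfl | rfl | rfl | rfl
      · exact ⟨(h.A_ne_comb _).symm, (h.B_ne_comb (by norm_num)).symm⟩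
      · exact ⟨(h.A_ne_comb _).symm, (h.B_ne_comb I_ne_zero).symm⟩
      · exact ⟨(h.A_ne_comb _).symm, (h.B_ne_comb (by norm_num)).symm⟩
      · exact ⟨(h.A_ne_comb _).symm, (h.B_ne_comb (by simp)).symm⟩

lemma Setup.setbuilder_eq (h : Setup a b i j k l) :
    {C : Phi | ∃ ξ ∈ mu4, C = cls (ξ • a + b)} =
      insert (cls ((1 : ℂ) • a + b)) (insert (cls (I • a + b))
        (insert (cls ((-1 : ℂ) • a + b)) {cls ((-I : ℂ) • a + b)})) := by
  ext C
  simp only [Set.mem_setOf_eq, Set.mem_insert_iff, Set.mem_singleton_iff, mu4]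
  constructor
  · rintro ⟨ξ, hξ, rfl⟩
    rcases mu4_cases hξ with rfl | rfl | rfl | rfl
    · exact Or.inl rfl
    · exact Or.inr (Or.inr (Or.inl rfl))
    · exact Or.inr (Or.inl rfl)
    · exact Or.inr (Or.inr (Or.inr rfl))
  · rintro (rfl | rfl | rfl | rfl)
    · exact ⟨1, by norm_num, rfl⟩
    · exact ⟨I, I4, rfl⟩
    · exact ⟨-1, by norm_num, rfl⟩
    · exact ⟨-I, negI4, rfl⟩

lemma Setup.ne_combs (h : Setup a b i j k l) {ξ η : ℂ} (hne : ξ ≠ η) :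
    cls (ξ • a + b) ≠ cls (η • a + b) := fun e => hne (h.comb_inj e)

lemma Setup.lab_ncard (h : Setup a b i j k l) :
    (insert (cls ((1 : ℂ) • a + b)) (insert (cls (I • a + b))
      (insert (cls ((-1 : ℂ) • a + b)) {cls ((-I : ℂ) • a + b)})) : Set Phi).ncard = 4 := by
  rw [Set.ncard_insert_of_notMem (by
      simp only [Set.mem_insert_iff, Set.mem_singleton_iff]
      push_neg
      exact ⟨h.ne_combs one_ne_I, h.ne_combs one_ne_negone, h.ne_combs one_ne_negI⟩)
    ((Set.finite_singleton _).insert _ |>.insert _),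
    Set.ncard_insert_of_notMem (by
      simp only [Set.mem_insert_iff, Set.mem_singleton_iff]
      push_neg
      exact ⟨h.ne_combs I_ne_negone, h.ne_combs I_ne_negI⟩)
    ((Set.finite_singleton _).insert _),
    Set.ncard_insert_of_notMem (by
      simp only [Set.mem_singleton_iff]
      exact h.ne_combs negone_ne_negI) (Set.finite_singleton _),
    Set.ncard_singleton]

lemma Setup.hat_ncard (h : Setup a b i j k l) (hA2 : cls a ∈ Lambda2) (hB2 : cls b ∈ Lambda2)
    (hP : a i * a j * b k * b l = 1 ∨ a i * a j * b k * b l = -1) :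
    mult (cls a) (cls b) = 6 := by
  rw [mult, h.hat_eq hA2 hB2 hP]
  rw [Set.ncard_insert_of_notMem (by
      simp only [Set.mem_insert_iff, Set.mem_singleton_iff]
      push_neg
      exact ⟨h.AB_ne, h.A_ne_comb _, h.A_ne_comb _, h.A_ne_comb _, h.A_ne_comb _⟩)
    (((((Set.finite_singleton _).insert _).insert _).insert _).insert _),
    Set.ncard_insert_of_notMem (by
      simp only [Set.mem_insert_iff, Set.mem_singleton_iff]
      push_neg
      exact ⟨(h.B_ne_comb (by norm_num)), (h.B_ne_comb I_ne_zero),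
        (h.B_ne_comb (by norm_num)), (h.B_ne_comb (by simp))⟩)
    ((((Set.finite_singleton _).insert _).insert _).insert _)]
  rw [show (insert (cls ((1 : ℂ) • a + b)) (insert (cls (I • a + b))
      (insert (cls ((-1 : ℂ) • a + b)) {cls ((-I : ℂ) • a + b)})) : Set Phi).ncard = 4
    from h.lab_ncard]

end G31
namespace G31

/-- let `[a], [b] ∈ Λ₂` with `Supp a ∩ Supp b = ∅`.  Then `prod (a+b) = ±1` or
`prod (a+b) = ±i`, the alternative being independent of the chosen representatives.  If
`prod (a+b) = ±1` then `mult(a,b) = 6` and `Λ(a,b) = {[ξa + b] : ξ ∈ μ₄} ⊆ Λ₃`, a set of 4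
elements; if `prod (a+b) = ±i` then `mult(a,b) = 2`. -/
theorem stmt7 : ∀ A ∈ Lambda2, ∀ B ∈ Lambda2, ∀ a b : V, cls a = A → cls b = B →
    Supp a ∩ Supp b = ∅ →
    ((prod4 (a + b) = 1 ∨ prod4 (a + b) = -1) ∨
      (prod4 (a + b) = I ∨ prod4 (a + b) = -I)) ∧
    (∀ a' b' : V, cls a' = A → cls b' = B →
      ((prod4 (a + b) = 1 ∨ prod4 (a + b) = -1) ↔
       (prod4 (a' + b') = 1 ∨ prod4 (a' + b') = -1))) ∧
    ((prod4 (a + b) = 1 ∨ prod4 (a + b) = -1) →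
      mult A B = 6 ∧
      LambdaAB A B = {C | ∃ ξ ∈ mu4, C = cls (ξ • a + b)} ∧
      LambdaAB A B ⊆ Lambda3 ∧ (LambdaAB A B).ncard = 4) ∧
    ((prod4 (a + b) = I ∨ prod4 (a + b) = -I) → mult A B = 2) := by
  intro A hA B hB a b ha hb hdisj
  obtain ⟨i, j, k, l, h⟩ := exists_setup hA hB ha hb hdisj
  subst ha; subst hb
  refine ⟨?_, ?_, ?_, ?_⟩
  · rw [h.prod_ab]
    rcases mu4_cases h.P4 with h1 | h1 | h1 | h1
    · exact Or.inl (Or.inl h1)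
    · exact Or.inl (Or.inr h1)
    · exact Or.inr (Or.inl h1)
    · exact Or.inr (Or.inr h1)
  · intro a' b' ha' hb'
    obtain ⟨ξ, hξ, rfl⟩ := cls_eq_iff.mp ha'.symm
    obtain ⟨η, hη, rfl⟩ := cls_eq_iff.mp hb'.symm
    rw [h.prod_ab, h.prod_add]
    have hε : ξ ^ 2 * η ^ 2 = 1 ∨ ξ ^ 2 * η ^ 2 = -1 :=
      sq_cases (by rw [show (ξ ^ 2 * η ^ 2) ^ 2 = ξ ^ 4 * η ^ 4 by ring, hξ, hη, one_mul])
    rcases hε with hε | hε <;> rw [hε]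
    · rw [one_mul]
    · constructor
      · rintro (h1 | h1) <;> rw [h1]
        · right; norm_num
        · left; norm_num
      · rintro (h1 | h1)
        · right; linear_combination -h1
        · left; linear_combination -h1
  · intro hP1
    rw [h.prod_ab] at hP1
    refine ⟨h.hat_ncard hA hB hP1, ?_, ?_, ?_⟩
    · rw [h.lab_eq hA hB hP1, h.setbuilder_eq]
    · rw [h.lab_eq hA hB hP1]
      rintro C (rfl | rfl | rfl | rfl)
      · exact h.mem_L3 hP1 (by norm_num)
      · exact h.mem_L3 hP1 I4
      · exact h.mem_L3 hP1 (by norm_num)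
      · exact h.mem_L3 hP1 negI4
    · rw [h.lab_eq hA hB hP1]; exact h.lab_ncard
  · intro hPi
    rw [h.prod_ab] at hPi
    rw [mult, h.hat_eq2 hA hB hPi]
    exact Set.ncard_pair h.AB_ne

end G31
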